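/- arXiv:1908.00888 — 8 statements merged into one kernel-verified Lean document; each statement's English description precedes it below -/
import Mathlib

section
/- Let c>0 and f∈C_p(ℝ) belong to P_c, i.e. δ⁺_{n,k}(y;f)-δ⁻_{n,k}(y;f) ≤ -c for all n∈ℕ₀, k∈ℤ, y∈(0,1). Then c·y(1-y) ≤ f(y) for all y∈(0,1). In particular, f>0 on (0,1). -/
/-- `C_p(ℝ)`: continuous, periodic with period 1, vanishing at 0. -/
def IsCp (f : ℝ → ℝ) : Prop := Continuous f ∧ (∀ x, f (x + 1) = f x) ∧ f 0 = 0

/-- Forward difference δ⁺_{n,k}(y;f). -/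
noncomputable def delP (r : ℕ) (f : ℝ → ℝ) (n : ℕ) (k : ℤ) (y : ℝ) : ℝ :=
  (f (((k : ℝ) + 1) / (r : ℝ) ^ n) - f (((k : ℝ) + y) / (r : ℝ) ^ n)) / ((1 - y) / (r : ℝ) ^ n)

/-- Backward difference δ⁻_{n,k}(y;f). -/
noncomputable def delM (r : ℕ) (f : ℝ → ℝ) (n : ℕ) (k : ℤ) (y : ℝ) : ℝ :=
  (f (((k : ℝ) + y) / (r : ℝ) ^ n) - f ((k : ℝ) / (r : ℝ) ^ n)) / (y / (r : ℝ) ^ n)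

/-- Second-order central difference Δ_{n,k}(y;f). -/
noncomputable def Del (r : ℕ) (f : ℝ → ℝ) (n : ℕ) (k : ℤ) (y : ℝ) : ℝ :=
  2 * (r : ℝ) ^ n * (delP r f n k y - delM r f n k y)

/-- The operator U: U_ψ(x) = Σ_{j≥0} ψ(rʲx)/rʲ. -/
noncomputable def Uop (r : ℕ) (ψ : ℝ → ℝ) (x : ℝ) : ℝ := ∑' j : ℕ, ψ ((r : ℝ) ^ j * x) / (r : ℝ) ^ j

/-- Distance to the integers. -/
noncomputable def dZ (x : ℝ) : ℝ := Metric.infDist x (Set.range (Int.cast : ℤ → ℝ))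

/-- The generalized Takagi function τ_r. -/
noncomputable def tak (r : ℕ) : ℝ → ℝ := Uop r dZ

/-- The class P_c: Δ_{n,k}(y;f) ≤ -2crⁿ for all admissible (n,k,y). -/
def memP (r : ℕ) (c : ℝ) (f : ℝ → ℝ) : Prop :=
  ∀ (n : ℕ) (k : ℤ), 0 ≤ k → k ≤ (r : ℤ) ^ n - 1 →
    ∀ y ∈ Set.Ioo (0 : ℝ) 1, Del r f n k y ≤ -2 * c * (r : ℝ) ^ n

/-- The parabola q_f(t,x;z). -/
noncomputable def qf (f : ℝ → ℝ) (t x z : ℝ) : ℝ := f z + (x - z) ^ 2 / (2 * t)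

lemma IsCp.apply_one {f : ℝ → ℝ} (hf : IsCp f) : f 1 = 0 := by
  simpa [hf.2.2] using hf.2.1 0

lemma delP_sub_delM_zero_zero (r : ℕ) (f : ℝ → ℝ) {y : ℝ} (hy0 : y ≠ 0) (hy1 : y ≠ 1) :
    delP r f 0 0 y - delM r f 0 0 y = ((1 - y) * f 0 + y * f 1 - f y) / (y * (1 - y)) := by
  have hy1' : 1 - y ≠ 0 := sub_ne_zero.mpr hy1.symm
  simp only [delP, delM, pow_zero, Int.cast_zero, zero_add, div_one]
  field_simp
  ring

theorem stmt1_general (r : ℕ) (c : ℝ) (hc : 0 < c) (f : ℝ → ℝ) (hf : IsCp f)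
    (hP : ∀ (n : ℕ) (k : ℤ), ∀ y ∈ Set.Ioo (0:ℝ) 1,
      delP r f n k y - delM r f n k y ≤ -c) :
    ∀ y ∈ Set.Ioo (0:ℝ) 1, c * y * (1 - y) ≤ f y ∧ 0 < f y := by
  intro y hy
  have hy0 : 0 < y := hy.1
  have hy1 : 0 < 1 - y := sub_pos.mpr hy.2
  have hweight : 0 < y * (1 - y) := mul_pos hy0 hy1
  have h := hP 0 0 y hy
  rw [delP_sub_delM_zero_zero r f hy0.ne' (by linarith), hf.2.2, hf.apply_one,
    div_le_iff₀ hweight] at h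
  have hbound : c * y * (1 - y) ≤ f y := by linarith
  exact ⟨hbound, (by positivity : 0 < c * y * (1 - y)).trans_le hbound⟩

theorem stmt1 (r : ℕ) (hr : 2 ≤ r) (c : ℝ) (hc : 0 < c) (f : ℝ → ℝ) (hf : IsCp f)
    (hP : ∀ (n : ℕ) (k : ℤ), ∀ y ∈ Set.Ioo (0:ℝ) 1,
      delP r f n k y - delM r f n k y ≤ -c) :
    ∀ y ∈ Set.Ioo (0:ℝ) 1, c * y * (1 - y) ≤ f y ∧ 0 < f y :=
  stmt1_general r c hc f hf hP
end

section
/- Let c>0 and suppose f∈C_p(ℝ) belongs to P_c (with respect to an integer r≥2). Then f is nowhere differentiable on ℝ: for every x∈ℝ, f is not differentiable at x. -/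
theorem stmt2 (r : ℕ) (hr : 2 ≤ r) (c : ℝ) (hc : 0 < c) (f : ℝ → ℝ) (hf : IsCp f)
    (hP : ∀ (n : ℕ) (k : ℤ), ∀ y ∈ Set.Ioo (0:ℝ) 1,
      delP r f n k y - delM r f n k y ≤ -c) :
    ∀ x : ℝ, ¬ DifferentiableAt ℝ f x := by
  intro x hdiff
  set L := deriv f x with hL
  have hd : HasDerivAt f L x := hdiff.hasDerivAt
  have ho := Asymptotics.isLittleO_iff.mp (hasDerivAt_iff_isLittleO.mp hd)
    (show (0:ℝ) < c/16 by linarith)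
  rw [Metric.eventually_nhds_iff] at ho
  obtain ⟨δ, hδ, hball⟩ := ho
  have hr1 : (1:ℝ) < (r:ℝ) := by exact_mod_cast lt_of_lt_of_le one_lt_two hr
  obtain ⟨n, hn⟩ := pow_unbounded_of_one_lt (1/δ) hr1
  set h : ℝ := (r:ℝ)^n with hhdef
  have hh : 0 < h := pow_pos (by linarith) n
  have hinv : 1/h < δ := by
    rw [div_lt_iff₀ hh]
    rw [div_lt_iff₀ hδ] at hn
    nlinarith
  set k : ℤ := ⌊h * x⌋ with hk
  have hk1 : (k:ℝ) ≤ h * x := Int.floor_le _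
  have hk2 : h * x < (k:ℝ) + 1 := Int.lt_floor_add_one _
  set a : ℝ := (k:ℝ)/h with ha
  set m : ℝ := ((k:ℝ) + 1/2)/h with hm
  set b : ℝ := ((k:ℝ) + 1)/h with hb
  have hda : |a - x| ≤ 1/h := by
    rw [abs_le]
    constructor
    · rw [ha, div_sub' (ne_of_gt hh), ← neg_div, div_le_div_iff₀ hh hh]; nlinarith
    · rw [ha, div_sub' (ne_of_gt hh), div_le_div_iff₀ hh hh]; nlinarith
  have hdm : |m - x| ≤ 1/h := by
    rw [abs_le]
    constructor
    · rw [hm, div_sub' (ne_of_gt hh), ← neg_div, div_le_div_iff₀ hh hh]; nlinarith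
    · rw [hm, div_sub' (ne_of_gt hh), div_le_div_iff₀ hh hh]; nlinarith
  have hdb : |b - x| ≤ 1/h := by
    rw [abs_le]
    constructor
    · rw [hb, div_sub' (ne_of_gt hh), ← neg_div, div_le_div_iff₀ hh hh]; nlinarith
    · rw [hb, div_sub' (ne_of_gt hh), div_le_div_iff₀ hh hh]; nlinarith
  have hg : ∀ z : ℝ, |z - x| ≤ 1/h → |f z - f x - (z - x) * L| ≤ c/16 * (1/h) := by
    intro z hz
    have hdist : dist z x < δ := by rw [Real.dist_eq]; linarith
    have := hball hdist
    simp only [Real.norm_eq_abs, smul_eq_mul] at this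
    calc |f z - f x - (z - x) * L| ≤ c/16 * |z - x| := this
      _ ≤ c/16 * (1/h) := by
          apply mul_le_mul_of_nonneg_left hz (by linarith)
  have hga := hg a hda
  have hgm := hg m hdm
  have hgb := hg b hdb
  have key := hP n k (1/2) ⟨by norm_num, by norm_num⟩
  have heq : delP r f n k (1/2) - delM r f n k (1/2) =
      2 * h * ((f b - f x - (b - x) * L) - 2 * (f m - f x - (m - x) * L)
        + (f a - f x - (a - x) * L)) := by
    unfold delP delM
    rw [ha, hm, hb, ← hhdef]
    field_simp
    ring
  set ga := f a - f x - (a - x) * L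
  set gm := f m - f x - (m - x) * L
  set gb := f b - f x - (b - x) * L
  have hG : -(c/(4*h)) ≤ gb - 2*gm + ga := by
    have h1 : -(c/16 * (1/h)) ≤ ga := neg_le_of_abs_le hga
    have h2 : gm ≤ c/16 * (1/h) := le_of_abs_le hgm
    have h3 : -(c/16 * (1/h)) ≤ gb := neg_le_of_abs_le hgb
    have : c/(4*h) = 4 * (c/16 * (1/h)) := by field_simp; ring
    rw [this]
    linarith
  have hfin : -(c/2) ≤ 2 * h * (gb - 2*gm + ga) := by
    have := mul_le_mul_of_nonneg_left hG (show (0:ℝ) ≤ 2*h by linarith)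
    have heq2 : 2*h * -(c/(4*h)) = -(c/2) := by field_simp; ring
    linarith [heq2 ▸ this]
  rw [heq] at key
  have : -(c/2) ≤ -c := le_trans hfin key
  linarith
end

section
/- Let f∈C_p(ℝ), fix an integer r≥2, a triplet (n,k,y) with n∈ℕ₀, 0≤k≤rⁿ-1, y∈(0,1), and t>0. Define q_f(t,x;z)=f(z)+(x-z)²/(2t). Then the inequality q_f(t,x;(k+y)/rⁿ) ≥ min{q_f(t,x;k/rⁿ), q_f(t,x;(k+1)/rⁿ)} holds for all x∈ℝ if and only if Δ_{n,k}(y;f) ≤ -1/t. -/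
/-- Abstract form of the parabola comparison criterion for three points `a < z < b`. -/
lemma key_parabola (t a z b Fa Fz Fb : ℝ) (ht : 0 < t) (h1 : a < z) (h2 : z < b) :
    (∀ x : ℝ, Fz + (x - z)^2/(2*t) ≥ min (Fa + (x-a)^2/(2*t)) (Fb + (x-b)^2/(2*t))) ↔
    2*t*((b-z)*Fa + (z-a)*Fb - (b-a)*Fz) ≤ -((z-a)*(b-z)*(b-a)) := by
  have hba : (0:ℝ) < b - a := by linarith
  have h2t : (0:ℝ) < 2*t := by linarith
  constructor
  · intro H
    set xs : ℝ := (a+b)/2 + t*(Fb-Fa)/(b-a) with hxsdef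
    have hxs : 2*xs*(b-a) = (a+b)*(b-a) + 2*t*(Fb-Fa) := by
      rw [hxsdef]; field_simp
    have heq : Fa + (xs-a)^2/(2*t) = Fb + (xs-b)^2/(2*t) := by
      have e : (xs-a)^2 - (xs-b)^2 = (b-a)*(2*xs - a - b) := by ring
      have e2 : ((xs-a)^2 - (xs-b)^2) = 2*t*(Fb - Fa) := by
        rw [e]
        have : (b-a)*(2*xs-a-b)*(b-a) = 2*t*(Fb-Fa)*(b-a) := by
          linear_combination (b-a)*hxs
        exact mul_right_cancel₀ (ne_of_gt hba) this
      field_simp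
      linarith [e2]
    have H1 := H xs
    rw [min_eq_left (le_of_eq heq)] at H1
    have T : (xs-a)^2 - (xs-z)^2 ≤ 2*t*(Fz - Fa) := by
      have h3 : (xs-a)^2/(2*t) - (xs-z)^2/(2*t) ≤ Fz - Fa := by linarith [H1]
      rw [div_sub_div_same, div_le_iff₀ h2t] at h3
      linarith [h3]
    have hdiff : ((xs-a)^2 - (xs-z)^2)*(b-a) = (z-a)*((b-z)*(b-a) + 2*t*(Fb-Fa)) := by
      have e : (xs-a)^2 - (xs-z)^2 = (z-a)*(2*xs - a - z) := by ring
      rw [e]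
      linear_combination (z-a)*hxs
    nlinarith [mul_le_mul_of_nonneg_right T hba.le, hdiff]
  · intro H x
    rcases le_total (2*x*(b-a)) ((a+b)*(b-a) + 2*t*(Fb-Fa)) with hx | hx
    · refine le_trans (min_le_left _ _) ?_
      have T : 2*t*(Fa - Fz) ≤ (x-z)^2 - (x-a)^2 := by
        nlinarith [mul_le_mul_of_nonneg_left hx (show (0:ℝ) ≤ z - a by linarith), H, hba]
      have h3 : (x-a)^2/(2*t) - (x-z)^2/(2*t) ≤ Fz - Fa := by
        rw [div_sub_div_same, div_le_iff₀ h2t]; linarith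
      linarith
    · refine le_trans (min_le_right _ _) ?_
      have T : 2*t*(Fb - Fz) ≤ (x-z)^2 - (x-b)^2 := by
        nlinarith [mul_le_mul_of_nonneg_left hx (show (0:ℝ) ≤ b - z by linarith), H, hba]
      have h3 : (x-b)^2/(2*t) - (x-z)^2/(2*t) ≤ Fz - Fb := by
        rw [div_sub_div_same, div_le_iff₀ h2t]; linarith
      linarith

theorem stmt3 (r : ℕ) (hr : 2 ≤ r) (f : ℝ → ℝ) (hf : IsCp f)
    (n : ℕ) (k : ℤ) (hk0 : 0 ≤ k) (hk1 : k ≤ (r:ℤ)^n - 1)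
    (y : ℝ) (hy : y ∈ Set.Ioo (0:ℝ) 1) (t : ℝ) (ht : 0 < t) :
    (∀ x : ℝ, qf f t x (((k:ℝ) + y) / (r:ℝ)^n) ≥
        min (qf f t x ((k:ℝ) / (r:ℝ)^n)) (qf f t x (((k:ℝ) + 1) / (r:ℝ)^n)))
      ↔ Del r f n k y ≤ -1 / t := by
  obtain ⟨hy0, hy1⟩ := hy
  have hrR : (0:ℝ) < (r:ℝ) := by positivity
  have hR : (0:ℝ) < (r:ℝ)^n := by positivity
  have h1 : (k:ℝ)/(r:ℝ)^n < ((k:ℝ)+y)/(r:ℝ)^n := by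
    rw [div_lt_div_iff₀ hR hR]; nlinarith
  have h2 : ((k:ℝ)+y)/(r:ℝ)^n < ((k:ℝ)+1)/(r:ℝ)^n := by
    rw [div_lt_div_iff₀ hR hR]; nlinarith
  have hiff := key_parabola t ((k:ℝ)/(r:ℝ)^n) (((k:ℝ)+y)/(r:ℝ)^n) (((k:ℝ)+1)/(r:ℝ)^n)
    (f ((k:ℝ)/(r:ℝ)^n)) (f (((k:ℝ)+y)/(r:ℝ)^n)) (f (((k:ℝ)+1)/(r:ℝ)^n)) ht h1 h2
  simp only [qf]
  rw [hiff]
  set R : ℝ := (r:ℝ)^n with hRdef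
  set Fa : ℝ := f ((k:ℝ)/R)
  set Fz : ℝ := f (((k:ℝ)+y)/R)
  set Fb : ℝ := f (((k:ℝ)+1)/R)
  have hRne : R ≠ 0 := ne_of_gt hR
  have hyne : y ≠ 0 := ne_of_gt hy0
  have h1yne : (1:ℝ) - y ≠ 0 := by linarith
  have htne : t ≠ 0 := ne_of_gt ht
  have hR3 : (0:ℝ) < R^3 := by positivity
  have hty : (0:ℝ) < t*(y*(1-y)) := mul_pos ht (mul_pos hy0 (by linarith))
  have e1 : 2*t*((((k:ℝ)+1)/R - ((k:ℝ)+y)/R)*Fa + (((k:ℝ)+y)/R - (k:ℝ)/R)*Fb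
      - (((k:ℝ)+1)/R - (k:ℝ)/R)*Fz) * R^3 = 2*t*(y*Fb + (1-y)*Fa - Fz)*R^2 := by
    field_simp; ring
  have e2 : -((((k:ℝ)+y)/R - (k:ℝ)/R) * (((k:ℝ)+1)/R - ((k:ℝ)+y)/R)
      * (((k:ℝ)+1)/R - (k:ℝ)/R)) * R^3 = -(y*(1-y)) := by
    field_simp; ring
  have e3 : Del r f n k y * (t*(y*(1-y))) = 2*t*(y*Fb + (1-y)*Fa - Fz)*R^2 := by
    rw [Del, delP, delM]; field_simp; ring
  have e4 : (-1/t) * (t*(y*(1-y))) = -(y*(1-y)) := by field_simp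
  constructor
  · intro h
    rw [← mul_le_mul_iff_of_pos_right hty, e3, e4, ← e1, ← e2]
    exact mul_le_mul_of_nonneg_right h hR3.le
  · intro h
    rw [← mul_le_mul_iff_of_pos_right hR3, e1, e2, ← e3, ← e4]
    exact mul_le_mul_of_nonneg_right h hty.le
end

section
/- Let f∈C_p(ℝ), r≥2 an integer, and c>0. Then f∈P_c if and only if for every n∈ℕ₀, every k∈ℤ, every y∈(0,1), every t ≥ 1/(2c rⁿ), and every x∈ℝ, one has q_f(t,x;(k+y)/rⁿ) ≥ min{q_f(t,x;k/rⁿ), q_f(t,x;(k+1)/rⁿ)}, where q_f(t,x;z)=f(z)+(x-z)²/(2t). -/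
set_option maxHeartbeats 1600000 in
theorem stmt4 (r : ℕ) (hr : 2 ≤ r) (f : ℝ → ℝ) (hf : IsCp f) (c : ℝ) (hc : 0 < c) :
    (∀ (n : ℕ) (k : ℤ), ∀ y ∈ Set.Ioo (0:ℝ) 1,
        delP r f n k y - delM r f n k y ≤ -c)
      ↔ ∀ (n : ℕ) (k : ℤ), ∀ y ∈ Set.Ioo (0:ℝ) 1, ∀ t : ℝ,
          1 / (2 * c * (r:ℝ)^n) ≤ t → ∀ x : ℝ,
          qf f t x (((k:ℝ) + y) / (r:ℝ)^n) ≥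
            min (qf f t x ((k:ℝ) / (r:ℝ)^n)) (qf f t x (((k:ℝ) + 1) / (r:ℝ)^n)) := by
  have hrpos : (0:ℝ) < (r:ℝ) := by
    have h0 : 0 < r := lt_of_lt_of_le (by norm_num) hr
    exact_mod_cast h0
  constructor
  · -- Forward direction
    intro H n k y hy t ht x
    obtain ⟨hy0, hy1⟩ := hy
    have H' := H n k y ⟨hy0, hy1⟩
    simp only [delP, delM] at H'
    by_contra hcon
    push_neg at hcon
    rw [lt_min_iff] at hcon
    obtain ⟨h1, h2⟩ := hcon
    simp only [qf] at h1 h2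
    have hR : (0:ℝ) < (r:ℝ)^n := pow_pos hrpos n
    set R := (r:ℝ)^n with hRdef
    set u := y / R with hud
    set v := (1 - y) / R with hvd
    have hu : 0 < u := by rw [hud]; exact div_pos hy0 hR
    have hv : 0 < v := by rw [hvd]; exact div_pos (by linarith) hR
    set A := f ((k:ℝ)/R) with hAd
    set B := f (((k:ℝ)+1)/R) with hBd
    set Z := f (((k:ℝ)+y)/R) with hZd
    have hza : ((k:ℝ)+y)/R = (k:ℝ)/R + u := by rw [hud, ← add_div]
    have hbz : ((k:ℝ)+1)/R = (k:ℝ)/R + u + v := by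
      rw [hud, hvd, ← add_div, ← add_div]; ring_nf
    rw [hza] at h1
    rw [hza, hbz] at h2
    have ht0 : 0 < t := lt_of_lt_of_le (by positivity) ht
    have h2t : (0:ℝ) < 2*t := by linarith
    have h1' := mul_lt_mul_of_pos_right h1 h2t
    have h2' := mul_lt_mul_of_pos_right h2 h2t
    simp only [add_mul, div_mul_cancel₀ _ (ne_of_gt h2t)] at h1' h2'
    rw [div_sub_div _ _ (ne_of_gt hv) (ne_of_gt hu), div_le_iff₀ (mul_pos hv hu)] at H'
    rw [div_le_iff₀ (by positivity : (0:ℝ) < 2*c*R)] at ht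
    have huvR : (u + v) * R = 1 := by
      rw [hud, hvd]; field_simp; ring
    have k1 := mul_lt_mul_of_pos_left h1' hv
    have k2 := mul_lt_mul_of_pos_left h2' hu
    have k3 : c * (v*u) ≤ v*(Z-A) + u*(Z-B) := by linarith
    have k3' := mul_le_mul_of_nonneg_left k3 (by linarith : (0:ℝ) ≤ 2*t)
    have k4 : 2*t*(c*(v*u)) < u*v*(u+v) := by nlinarith [k1, k2, k3']
    have k5 := mul_lt_mul_of_pos_right k4 hR
    have k6 := mul_le_mul_of_nonneg_left ht (le_of_lt (mul_pos hu hv))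
    have huv' : u*v*((u+v)*R) = u*v := by rw [huvR]; ring
    linarith [k5, k6, huv']
  · -- Backward direction
    intro P n k y hy
    obtain ⟨hy0, hy1⟩ := hy
    simp only [delP, delM]
    have hR : (0:ℝ) < (r:ℝ)^n := pow_pos hrpos n
    set R := (r:ℝ)^n with hRdef
    set u := y / R with hud
    set v := (1 - y) / R with hvd
    have hu : 0 < u := by rw [hud]; exact div_pos hy0 hR
    have hv : 0 < v := by rw [hvd]; exact div_pos (by linarith) hR
    set t := 1/(2*c*R) with htd
    have ht0 : 0 < t := by rw [htd]; positivity
    set A := f ((k:ℝ)/R) with hAd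
    set B := f (((k:ℝ)+1)/R) with hBd
    set Z := f (((k:ℝ)+y)/R) with hZd
    set x := ((k:ℝ)/R + ((k:ℝ)+1)/R)/2 + t*(B-A)*R with hx
    clear_value x
    have h := P n k y ⟨hy0, hy1⟩ t (by rw [htd, hRdef]) x
    rw [← hRdef] at h
    have qeq : qf f t x ((k:ℝ)/R) = qf f t x (((k:ℝ)+1)/R) := by
      simp only [qf]
      rw [← hAd, ← hBd, hx, htd]
      field_simp
      ring
    have hmin : min (qf f t x ((k:ℝ)/R)) (qf f t x (((k:ℝ)+1)/R)) = qf f t x ((k:ℝ)/R) := by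
      rw [qeq]; exact min_self _
    have h1 : qf f t x ((k:ℝ)/R) ≤ qf f t x (((k:ℝ)+y)/R) := le_trans (le_of_eq hmin.symm) h
    have h2 : qf f t x (((k:ℝ)+1)/R) ≤ qf f t x (((k:ℝ)+y)/R) := by
      rw [← qeq]; exact h1
    simp only [qf] at h1 h2
    rw [← hAd, ← hZd] at h1
    rw [← hBd, ← hZd] at h2
    have hza : ((k:ℝ)+y)/R = (k:ℝ)/R + u := by rw [hud, ← add_div]
    have hbz : ((k:ℝ)+1)/R = (k:ℝ)/R + u + v := by
      rw [hud, hvd, ← add_div, ← add_div]; ring_nf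
    rw [hza] at h1 h2
    rw [hbz] at h2
    have h2t : (0:ℝ) < 2*t := by linarith
    have h2teq : 2*t*(c*R) = 1 := by rw [htd]; field_simp
    have m1 := mul_le_mul_of_nonneg_right h1 (le_of_lt h2t)
    have m2 := mul_le_mul_of_nonneg_right h2 (le_of_lt h2t)
    simp only [add_mul, div_mul_cancel₀ _ (ne_of_gt h2t)] at m1 m2
    have k1 := mul_le_mul_of_nonneg_left m1 (le_of_lt hv)
    have k2 := mul_le_mul_of_nonneg_left m2 (le_of_lt hu)
    have huvR : (u + v) * R = 1 := by rw [hud, hvd]; field_simp; ring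
    have k4 : u*v*(u+v) ≤ 2*t*(v*(Z-A)+u*(Z-B)) := by nlinarith [k1, k2]
    have k5 : c*(u*v) ≤ v*(Z-A)+u*(Z-B) := by
      have m := mul_le_mul_of_nonneg_left k4 (le_of_lt (mul_pos hc hR))
      calc c*(u*v) = c*(u*v)*((u+v)*R) := by rw [huvR]; ring
        _ = c*R*(u*v*(u+v)) := by ring
        _ ≤ c*R*(2*t*(v*(Z-A)+u*(Z-B))) := m
        _ = (2*t*(c*R))*(v*(Z-A)+u*(Z-B)) := by ring
        _ = v*(Z-A)+u*(Z-B) := by rw [h2teq, one_mul]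
    rw [div_sub_div _ _ (ne_of_gt hv) (ne_of_gt hu), div_le_iff₀ (mul_pos hv hu)]
    linarith [k5]
end

section
/- Let r≥2 be an integer, ψ∈C_p(ℝ), and U_ψ(x)=Σ_{j=0}^∞ r^{-j}ψ(r^j x). Then for all n∈ℕ₀, 0≤k≤rⁿ-1, y∈(0,1): Δ_{n,k}(y;U_ψ) = Σ_{j=0}^{n-1} r^j Δ_{n-j,k}(y;ψ) − (2rⁿ/(y(1-y)))·U_ψ(y), where for n=0 the sum is interpreted as 0. -/
theorem stmt6 (r : ℕ) (hr : 2 ≤ r) (ψ : ℝ → ℝ) (hψ : IsCp ψ)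
    (n : ℕ) (k : ℤ) (hk0 : 0 ≤ k) (hk1 : k ≤ (r:ℤ)^n - 1)
    (y : ℝ) (hy : y ∈ Set.Ioo (0:ℝ) 1) :
    Del r (Uop r ψ) n k y =
      (∑ j ∈ Finset.range n, (r:ℝ)^j * Del r ψ (n - j) k y)
        - 2 * (r:ℝ)^n / (y * (1 - y)) * Uop r ψ y := by
  obtain ⟨hc, hper, h0⟩ := hψ
  obtain ⟨hy0, hy1⟩ := hy
  have hy1' : (0:ℝ) < 1 - y := by linarith
  have hr1 : (1:ℝ) < r := by exact_mod_cast lt_of_lt_of_le one_lt_two (by exact_mod_cast hr)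
  have hr0 : (0:ℝ) < r := lt_trans one_pos hr1
  have hrn : ∀ m : ℕ, (0:ℝ) < (r:ℝ)^m := fun m => pow_pos hr0 m
  have hper' : Function.Periodic ψ 1 := hper
  have hperZ : ∀ (x : ℝ) (m : ℤ), ψ (x + m) = ψ x := by
    intro x m
    simpa using (hper'.int_mul m) x
  -- boundedness
  obtain ⟨M, hM⟩ : ∃ M, ∀ x, |ψ x| ≤ M := by
    obtain ⟨C, hC⟩ := (isCompact_Icc (a := (0:ℝ)) (b := 1)).exists_bound_of_continuousOn
      hc.continuousOn
    refine ⟨C, fun x => ?_⟩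
    have hx : ψ x = ψ (Int.fract x) := by
      rw [← hperZ (Int.fract x) ⌊x⌋, Int.fract_add_floor]
    rw [hx]
    exact hC _ ⟨Int.fract_nonneg x, (Int.fract_lt_one x).le⟩
  have hsum : ∀ x, Summable (fun j : ℕ => ψ ((r:ℝ)^j * x) / (r:ℝ)^j) := by
    intro x
    apply Summable.of_norm_bounded (g := fun j => M * (1/(r:ℝ))^j)
    · exact (summable_geometric_of_lt_one (one_div_nonneg.mpr hr0.le)
        (by rw [div_lt_one hr0]; exact hr1)).mul_left M
    · intro j
      rw [Real.norm_eq_abs, abs_div, abs_of_pos (hrn j), one_div, inv_pow,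
        div_eq_mul_inv]
      exact mul_le_mul_of_nonneg_right (hM _) (inv_nonneg.mpr (hrn j).le)
  -- splitting lemma
  have hsplit : ∀ x : ℝ, Uop r ψ x = (∑ j ∈ Finset.range n, ψ ((r:ℝ)^j * x) / (r:ℝ)^j)
      + Uop r ψ ((r:ℝ)^n * x) / (r:ℝ)^n := by
    intro x
    have h1 := Summable.sum_add_tsum_nat_add n (hsum x)
    rw [Uop, ← h1]
    congr 1
    rw [Uop, ← tsum_div_const]
    apply tsum_congr; intro i
    rw [pow_add]
    have : (r:ℝ)^i * ((r:ℝ)^n * x) = (r:ℝ)^i * (r:ℝ)^n * x := by ring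
    rw [this, div_div]
  -- values of U at integer translates
  have hUint : ∀ m : ℤ, Uop r ψ (m:ℝ) = 0 := by
    intro m
    rw [Uop]
    convert tsum_zero with j
    have : (r:ℝ)^j * (m:ℝ) = 0 + ((r^j * m : ℤ):ℝ) := by push_cast; ring
    rw [this, hperZ, h0, zero_div]
  have hUshift : Uop r ψ ((k:ℝ) + y) = Uop r ψ y := by
    rw [Uop, Uop]
    apply tsum_congr; intro j
    have : (r:ℝ)^j * ((k:ℝ)+y) = (r:ℝ)^j * y + ((r^j*k : ℤ):ℝ) := by push_cast; ring
    rw [this, hperZ]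
  -- the three evaluations
  set S : ℝ → ℝ := fun t => ∑ j ∈ Finset.range n, ψ ((r:ℝ)^j * (((k:ℝ)+t)/(r:ℝ)^n)) / (r:ℝ)^j
    with hS
  have hrnne : ((r:ℝ)^n) ≠ 0 := (hrn n).ne'
  have hU1 : Uop r ψ ((k:ℝ)+1) = 0 := by
    rw [show ((k:ℝ)+1) = ((k+1:ℤ):ℝ) by push_cast; ring]
    exact hUint _
  have e1 : Uop r ψ (((k:ℝ)+1)/(r:ℝ)^n) = S 1 := by
    rw [hsplit, mul_div_cancel₀ _ hrnne, hU1, zero_div, add_zero]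
  have ey : Uop r ψ (((k:ℝ)+y)/(r:ℝ)^n) = S y + Uop r ψ y / (r:ℝ)^n := by
    rw [hsplit, mul_div_cancel₀ _ hrnne, hUshift]
  have e0 : Uop r ψ ((k:ℝ)/(r:ℝ)^n) = S 0 := by
    rw [hsplit, mul_div_cancel₀ _ hrnne, hUint, zero_div, add_zero]
    simp [hS]
  -- step B : the finite part equals the sum of Del's
  have keyB : 2*(r:ℝ)^n * ((S 1 - S y)/((1-y)/(r:ℝ)^n) - (S y - S 0)/(y/(r:ℝ)^n))
      = ∑ j ∈ Finset.range n, (r:ℝ)^j * Del r ψ (n-j) k y := by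
    rw [hS]
    simp only [Finset.sum_div, ← Finset.sum_sub_distrib, Finset.mul_sum]
    apply Finset.sum_congr rfl
    intro j hj
    have hjn : j < n := Finset.mem_range.mp hj
    have hm : (r:ℝ)^(n-j) * (r:ℝ)^j = (r:ℝ)^n := by
      rw [← pow_add]; congr 1; omega
    rw [Del, delP, delM]
    have harg : ∀ t : ℝ, (r:ℝ)^j * (((k:ℝ)+t)/(r:ℝ)^n) = ((k:ℝ)+t)/(r:ℝ)^(n-j) := by
      intro t
      rw [← hm]
      field_simp
    rw [harg 1, harg y, harg 0, add_zero, ← hm]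
    have hb := (hrn j).ne'
    have ha := (hrn (n-j)).ne'
    field_simp
  -- assemble
  rw [Del, delP, delM, e1, ey, e0, ← keyB, hS]
  field_simp
  ring
end

section
/- Let r≥2 be an integer, d(x)=dist(x,ℤ) the distance to the integers, and τ_r(x)=Σ_{j=0}^∞ r^{-j} d(r^j x) the generalized Takagi function. Then (r/(r-1))·x(1-x) ≤ τ_r(x) for all x∈[0,1]. -/
/-- Periodic parabola `fract x (1 - fract x)`. -/
noncomputable def pq (x : ℝ) : ℝ := Int.fract x * (1 - Int.fract x)

lemma dZ_nonneg (y : ℝ) : 0 ≤ dZ y := Metric.infDist_nonneg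

lemma dZ_le_half (y : ℝ) : dZ y ≤ 1/2 := by
  have h : dZ y ≤ dist y ((round y : ℤ) : ℝ) :=
    Metric.infDist_le_dist_of_mem ⟨round y, rfl⟩
  calc dZ y ≤ dist y ((round y : ℤ) : ℝ) := h
    _ = |y - round y| := Real.dist_eq _ _
    _ ≤ 1/2 := by exact_mod_cast abs_sub_round y

lemma min_le_dZ (y : ℝ) : min (Int.fract y) (1 - Int.fract y) ≤ dZ y := by
  by_contra hlt
  push_neg at hlt
  obtain ⟨_, ⟨z, rfl⟩, hd⟩ :=
    (Metric.infDist_lt_iff ⟨(((0:ℤ):ℝ)), Set.mem_range_self 0⟩).1 hlt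
  rw [Real.dist_eq] at hd
  revert hd
  rw [imp_false, not_lt]
  rcases le_or_gt (z:ℝ) (⌊y⌋ : ℝ) with h | h
  · have : Int.fract y ≤ y - z := by
      rw [Int.fract]; linarith
    calc min (Int.fract y) (1 - Int.fract y) ≤ Int.fract y := min_le_left _ _
      _ ≤ y - z := this
      _ ≤ |y - z| := le_abs_self _
  · have hz : (⌊y⌋ : ℝ) + 1 ≤ z := by exact_mod_cast Int.lt_iff_add_one_le.mp (by exact_mod_cast h)
    have : 1 - Int.fract y ≤ z - y := by
      rw [Int.fract]; linarith
    calc min (Int.fract y) (1 - Int.fract y) ≤ 1 - Int.fract y := min_le_right _ _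
      _ ≤ z - y := this
      _ ≤ |y - z| := by rw [abs_sub_comm]; exact le_abs_self _

lemma key (r : ℕ) (hr : 2 ≤ r) (t : ℝ) (ht0 : 0 ≤ t) (ht1 : t < 1) :
    (r:ℝ)*t*(1-t) - Int.fract ((r:ℝ)*t) * (1 - Int.fract ((r:ℝ)*t))
      ≤ ((r:ℝ)-1) * min t (1-t) := by
  have hr2 : (2:ℝ) ≤ (r:ℝ) := by exact_mod_cast hr
  set s := Int.fract ((r:ℝ)*t) with hs
  have hs0 : 0 ≤ s := Int.fract_nonneg _
  have hs1 : s < 1 := Int.fract_lt_one _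
  rcases le_total t (1-t) with h | h
  · rw [min_eq_left h]
    rcases le_or_gt 1 ((r:ℝ)*t) with h1 | h1
    · nlinarith [mul_nonneg ht0 (sub_nonneg.2 h1), mul_nonneg hs0 (by linarith : (0:ℝ) ≤ 1 - s)]
    · have hseq : s = (r:ℝ)*t := Int.fract_eq_self.2 ⟨by positivity, h1⟩
      nlinarith [mul_nonneg (mul_nonneg ht0 (by linarith : (0:ℝ) ≤ (r:ℝ)-1))
        (by linarith : (0:ℝ) ≤ 1 - (r:ℝ)*t)]
  · rw [min_eq_right h]
    rcases le_or_gt ((r:ℝ)*t) ((r:ℝ)-1) with h1 | h1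
    · nlinarith [mul_nonneg (by linarith : (0:ℝ) ≤ 1-t) (sub_nonneg.2 h1),
        mul_nonneg hs0 (by linarith : (0:ℝ) ≤ 1 - s)]
    · have hrt : (r:ℝ)*t < r := by nlinarith
      have hseq : s = (r:ℝ)*t - ((r:ℝ)-1) := by
        have h2 : Int.fract ((r:ℝ)*t - (((r:ℤ)-1 : ℤ) : ℝ)) = s := Int.fract_sub_intCast _ _
        have h3 : (((r:ℤ)-1 : ℤ) : ℝ) = (r:ℝ) - 1 := by push_cast; ring
        rw [h3] at h2
        rw [← h2, Int.fract_eq_self.2 ⟨by linarith, by linarith⟩]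
      nlinarith [mul_nonneg (mul_nonneg (by linarith : (0:ℝ) ≤ 1-t)
        (by linarith : (0:ℝ) ≤ (r:ℝ)-1)) hs0]

lemma point (r : ℕ) (hr : 2 ≤ r) (y : ℝ) :
    (r:ℝ)/((r:ℝ)-1) * (pq y - pq ((r:ℝ)*y)/(r:ℝ)) ≤ dZ y := by
  have hr2 : (2:ℝ) ≤ (r:ℝ) := by exact_mod_cast hr
  have hr1 : (0:ℝ) < (r:ℝ) - 1 := by linarith
  set t := Int.fract y with ht
  have hfr : Int.fract ((r:ℝ)*y) = Int.fract ((r:ℝ)*t) := by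
    have : (r:ℝ)*y = (r:ℝ)*t + (((r:ℤ)*⌊y⌋ : ℤ) : ℝ) := by
      rw [ht, Int.fract]; push_cast; ring
    rw [this, Int.fract_add_intCast]
  have hkey := key r hr t (Int.fract_nonneg y) (Int.fract_lt_one y)
  have hmin := min_le_dZ y
  rw [div_mul_eq_mul_div, div_le_iff₀ hr1]
  have hpq : (r:ℝ) * (pq y - pq ((r:ℝ)*y)/(r:ℝ)) =
      (r:ℝ)*t*(1-t) - Int.fract ((r:ℝ)*t) * (1 - Int.fract ((r:ℝ)*t)) := by
    rw [pq, pq, hfr, ← ht]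
    field_simp
  rw [hpq]
  calc (r:ℝ)*t*(1-t) - Int.fract ((r:ℝ)*t) * (1 - Int.fract ((r:ℝ)*t))
      ≤ ((r:ℝ)-1) * min t (1-t) := hkey
    _ ≤ dZ y * ((r:ℝ)-1) := by
        rw [mul_comm]; exact mul_le_mul_of_nonneg_right hmin (le_of_lt hr1)

lemma pq_nonneg (y : ℝ) : 0 ≤ pq y :=
  mul_nonneg (Int.fract_nonneg _) (by linarith [Int.fract_lt_one y])

lemma pq_le_one (y : ℝ) : pq y ≤ 1 := by
  have h0 := Int.fract_nonneg y
  have h1 := Int.fract_lt_one y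
  rw [pq]; nlinarith

theorem stmt8 (r : ℕ) (hr : 2 ≤ r) :
    ∀ x ∈ Set.Icc (0:ℝ) 1, (r:ℝ) / ((r:ℝ) - 1) * (x * (1 - x)) ≤ tak r x := by
  have hr2 : (2:ℝ) ≤ (r:ℝ) := by exact_mod_cast hr
  have hrpos : (0:ℝ) < (r:ℝ) := by linarith
  have hrinv0 : (0:ℝ) ≤ 1/(r:ℝ) := by positivity
  have hrinv1 : (1:ℝ)/(r:ℝ) < 1 := by rw [div_lt_one hrpos]; linarith
  have hgeo : Summable (fun j : ℕ => (1/(r:ℝ))^j) :=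
    summable_geometric_of_lt_one hrinv0 hrinv1
  intro x hx
  obtain ⟨hx0, hx1⟩ := hx
  have hsumd : Summable (fun j : ℕ => dZ ((r:ℝ)^j * x) / (r:ℝ)^j) := by
    refine hgeo.of_nonneg_of_le
      (fun j => div_nonneg (dZ_nonneg _) (by positivity)) (fun j => ?_)
    have hb : dZ ((r:ℝ)^j * x) ≤ 1 := le_trans (dZ_le_half _) (by norm_num)
    calc dZ ((r:ℝ)^j * x) / (r:ℝ)^j ≤ 1 / (r:ℝ)^j := by
          apply div_le_div_of_nonneg_right hb (by positivity) |>.trans_eq rfl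
      _ = (1/(r:ℝ))^j := by rw [one_div_pow]
  rcases eq_or_lt_of_le hx1 with h1 | h1
  · subst h1
    have : (r:ℝ)/((r:ℝ)-1) * ((1:ℝ) * (1 - 1)) = 0 := by ring
    rw [this]
    exact tsum_nonneg fun j => div_nonneg (dZ_nonneg _) (by positivity)
  · set a : ℕ → ℝ := fun j => pq ((r:ℝ)^j * x) / (r:ℝ)^j with ha
    have hsa : Summable a := by
      refine hgeo.of_nonneg_of_le
        (fun j => div_nonneg (pq_nonneg _) (by positivity)) (fun j => ?_)
      calc pq ((r:ℝ)^j * x) / (r:ℝ)^j ≤ 1 / (r:ℝ)^j :=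
            div_le_div_of_nonneg_right (pq_le_one _) (by positivity) |>.trans_eq rfl
        _ = (1/(r:ℝ))^j := by rw [one_div_pow]
    have hsa' : Summable (fun j => a (j+1)) := (summable_nat_add_iff 1).2 hsa
    have htel : ∑' j, (a j - a (j+1)) = a 0 := by
      rw [Summable.tsum_sub hsa hsa']
      have h := Summable.tsum_eq_zero_add hsa
      linarith
    set c : ℝ := (r:ℝ)/((r:ℝ)-1) with hc
    have hpt : ∀ j : ℕ, c * (a j - a (j+1)) ≤ dZ ((r:ℝ)^j * x) / (r:ℝ)^j := by
      intro j
      have hAj : a j - a (j+1) = (pq ((r:ℝ)^j*x) - pq ((r:ℝ)*((r:ℝ)^j*x))/(r:ℝ)) / (r:ℝ)^j := by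
        have hmul : (r:ℝ)^(j+1) * x = (r:ℝ)*((r:ℝ)^j * x) := by ring
        simp only [ha, hmul]
        have hrj : (r:ℝ)^j ≠ 0 := by positivity
        field_simp
        ring
      rw [hAj, mul_div_assoc']
      exact div_le_div_of_nonneg_right (point r hr ((r:ℝ)^j * x)) (by positivity)
        |>.trans_eq rfl
    have hsg : Summable (fun j => c * (a j - a (j+1))) := (hsa.sub hsa').mul_left c
    have ha0 : a 0 = x * (1 - x) := by
      have hfx : Int.fract x = x := Int.fract_eq_self.2 ⟨hx0, h1⟩
      simp [ha, pq, hfx]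
    calc c * (x * (1 - x)) = c * a 0 := by rw [ha0]
      _ = ∑' j, c * (a j - a (j+1)) := by rw [tsum_mul_left, htel]
      _ ≤ ∑' j, dZ ((r:ℝ)^j * x) / (r:ℝ)^j := Summable.tsum_le_tsum hpt hsg hsumd
      _ = tak r x := rfl
end

section
/- Let r≥2 be an integer. If ψ∈C_p(ℝ) is concave on [0,1] and ψ>0 on (0,1), then U_ψ∈P_c with c=(2r/(r-1))·ψ(1/2), i.e., Δ_{n,k}(y;U_ψ) ≤ -2crⁿ for all n∈ℕ₀, 0≤k≤rⁿ-1, y∈(0,1). -/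
private lemma intRe_mul_pred_nonneg (n : ℤ) : 0 ≤ (n:ℝ) * ((n:ℝ) - 1) := by
  have h : (0:ℤ) ≤ n * (n-1) := by
    rcases le_or_gt 1 n with h|h
    · exact mul_nonneg (by linarith) (by linarith)
    · have := mul_nonneg (by linarith : (0:ℤ) ≤ -n) (by linarith : (0:ℤ) ≤ -(n-1))
      nlinarith
  have h2 : (0:ℝ) ≤ ((n*(n-1) : ℤ) : ℝ) := by exact_mod_cast h
  push_cast at h2; linarith

private lemma per_int {ψ : ℝ → ℝ} (hper : ∀ x, ψ (x+1) = ψ x) (x : ℝ) (m : ℤ) :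
    ψ (x + m) = ψ x := by
  have hp : Function.Periodic ψ 1 := hper
  simpa using (hp.int_mul m) x

private lemma psi_fract {ψ : ℝ → ℝ} (hper : ∀ x, ψ (x+1) = ψ x) (x : ℝ) :
    ψ (Int.fract x) = ψ x := by
  have h := per_int hper (Int.fract x) ⌊x⌋
  rw [add_comm, Int.floor_add_fract] at h
  exact h.symm

private lemma psi_int {ψ : ℝ → ℝ} (hper : ∀ x, ψ (x+1) = ψ x) (h0 : ψ 0 = 0) (m : ℤ) :
    ψ (m:ℝ) = 0 := by
  have := per_int hper 0 m
  rw [zero_add] at this; rw [this, h0]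

/-- pointwise inequality: (r/(r-1))·(x(1-x) - {rx}(1-{rx})/r²) ≤ min x (1-x). -/
private lemma pt_ineq (r : ℕ) (hr : 2 ≤ r) {x : ℝ} (hx0 : 0 ≤ x) (hx1 : x < 1) :
    (r:ℝ)/((r:ℝ)-1) * (x*(1-x) - Int.fract ((r:ℝ)*x) * (1 - Int.fract ((r:ℝ)*x)) / (r:ℝ)^2)
      ≤ min x (1-x) := by
  set ρ : ℝ := (r:ℝ) with hρdef
  have hρ : 2 ≤ ρ := by rw [hρdef]; exact_mod_cast hr
  have hρ0 : (0:ℝ) < ρ := by linarith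
  have hρ1 : (0:ℝ) < ρ - 1 := by linarith
  set i : ℤ := ⌊ρ*x⌋ with hi
  set u : ℝ := Int.fract (ρ*x) with hu
  have hui : (i:ℝ) + u = ρ*x := Int.floor_add_fract _
  have hu0 : 0 ≤ u := Int.fract_nonneg _
  have hu1 : u < 1 := Int.fract_lt_one _
  have hi0 : (0:ℤ) ≤ i := Int.floor_nonneg.2 (by positivity)
  have hi0' : (0:ℝ) ≤ (i:ℝ) := by exact_mod_cast hi0
  have hiltr : i < (r:ℤ) := by
    rw [hi]; apply Int.floor_lt.2; push_cast; rw [← hρdef]; nlinarith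
  have hile : (i:ℝ) ≤ ρ - 1 := by
    have : ((i:ℝ) + 1) ≤ (r:ℝ) := by exact_mod_cast hiltr
    rw [← hρdef] at this; linarith
  have key : ρ * (ρ^2*(x*(1-x)) - u*(1-u)) ≤ min x (1-x) * ((ρ-1) * ρ^2) := by
    rcases le_total x (1-x) with h|h
    · rw [min_eq_left h]
      have h1 : 0 ≤ (i:ℝ)*((i:ℝ)-1) := intRe_mul_pred_nonneg i
      have cert : x * ((ρ-1)*ρ^2) - ρ*(ρ^2*(x*(1-x)) - u*(1-u))
          = ρ*((i:ℝ)*((i:ℝ)-1)) + 2*ρ*(i:ℝ)*u := by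
        linear_combination (-ρ*(ρ*x + (i:ℝ) + u - 1)) * hui
      nlinarith [mul_nonneg hρ0.le h1, mul_nonneg (mul_nonneg hρ0.le hi0') hu0]
    · rw [min_eq_right h]
      have h1 : 0 ≤ (ρ-1-(i:ℝ))*(ρ-2-(i:ℝ)) := by
        have h2 := intRe_mul_pred_nonneg ((r:ℤ) - 1 - i)
        push_cast at h2; rw [← hρdef] at h2; nlinarith
      have h2 : (0:ℝ) ≤ ρ-1-(i:ℝ) := by linarith
      have cert : (1-x) * ((ρ-1)*ρ^2) - ρ*(ρ^2*(x*(1-x)) - u*(1-u))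
          = ρ*((ρ-1-(i:ℝ))*(ρ-2-(i:ℝ))) + ρ*((ρ-1-(i:ℝ))*(2-2*u)) := by
        linear_combination (ρ*(-(ρ*x) - (i:ℝ) - u + 2*ρ - 1)) * hui
      nlinarith [mul_nonneg hρ0.le h1,
        mul_nonneg hρ0.le (mul_nonneg h2 (by linarith : (0:ℝ) ≤ 2-2*u))]
  have e : x*(1-x) - u*(1-u)/ρ^2 = (ρ^2*(x*(1-x)) - u*(1-u))/ρ^2 := by
    field_simp
  rw [e, div_mul_div_comm, div_le_iff₀ (by positivity : (0:ℝ) < (ρ-1)*ρ^2)]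
  calc ρ * (ρ^2*(x*(1-x)) - u*(1-u)) ≤ min x (1-x) * ((ρ-1) * ρ^2) := key
    _ = min x (1-x) * ((ρ-1) * ρ^2) := rfl
open Set

private lemma tent {ψ : ℝ → ℝ} (hconc : ConcaveOn ℝ (Set.Icc (0:ℝ) 1) ψ)
    (h0 : ψ 0 = 0) (h1 : ψ 1 = 0) {t : ℝ} (ht0 : 0 ≤ t) (ht1 : t ≤ 1) :
    2 * ψ (1/2) * min t (1-t) ≤ ψ t := by
  rcases le_total t (1/2) with h|h
  · have hc := hconc.2 (show (0:ℝ) ∈ Set.Icc (0:ℝ) 1 by norm_num)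
      (show (1/2:ℝ) ∈ Set.Icc (0:ℝ) 1 by norm_num)
      (show (0:ℝ) ≤ 1-2*t by linarith) (show (0:ℝ) ≤ 2*t by linarith)
      (show (1-2*t) + (2*t) = 1 by ring)
    simp only [smul_eq_mul] at hc
    have harg : (1-2*t) * 0 + 2*t * (1/2) = t := by ring
    rw [harg, h0] at hc
    rw [min_eq_left (by linarith)]
    linarith
  · have hc := hconc.2 (show (1/2:ℝ) ∈ Set.Icc (0:ℝ) 1 by norm_num)
      (show (1:ℝ) ∈ Set.Icc (0:ℝ) 1 by norm_num)
      (show (0:ℝ) ≤ 2-2*t by linarith) (show (0:ℝ) ≤ 2*t-1 by linarith)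
      (show (2-2*t) + (2*t-1) = 1 by ring)
    simp only [smul_eq_mul] at hc
    have harg : (2-2*t) * (1/2) + (2*t-1) * 1 = t := by ring
    rw [harg, h1] at hc
    rw [min_eq_right (by linarith)]
    linarith

private lemma psi_bound {ψ : ℝ → ℝ} (hcont : Continuous ψ) (hper : ∀ x, ψ (x+1) = ψ x) :
    ∃ C : ℝ, 0 ≤ C ∧ ∀ x : ℝ, |ψ x| ≤ C := by
  obtain ⟨C, hC⟩ := isCompact_Icc.exists_bound_of_continuousOn
    (s := Set.Icc (0:ℝ) 1) hcont.continuousOn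
  refine ⟨max C 0, le_max_right _ _, fun x => ?_⟩
  have hf : ψ (Int.fract x) = ψ x := by
    have h := (show Function.Periodic ψ 1 from hper).int_mul ⌊x⌋ (Int.fract x)
    rw [mul_one, add_comm, Int.floor_add_fract] at h
    exact h.symm
  rw [← hf]
  calc |ψ (Int.fract x)| ≤ C := hC _ ⟨Int.fract_nonneg x, (Int.fract_lt_one x).le⟩
    _ ≤ max C 0 := le_max_left _ _

private lemma usummable {ψ : ℝ → ℝ} (hcont : Continuous ψ) (hper : ∀ x, ψ (x+1) = ψ x)
    {r : ℕ} (hr : 2 ≤ r) (x : ℝ) :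
    Summable (fun j : ℕ => ψ ((r:ℝ)^j * x) / (r:ℝ)^j) := by
  obtain ⟨C, hC0, hC⟩ := psi_bound hcont hper
  have hρ : (2:ℝ) ≤ (r:ℝ) := by exact_mod_cast hr
  refine Summable.of_norm_bounded (g := fun j => C * (1/(r:ℝ))^j)
    ((summable_geometric_of_lt_one (by positivity)
      (by rw [div_lt_one (by linarith)]; linarith)).mul_left C)
    (fun j => ?_)
  show _ ≤ C * (1/(r:ℝ))^j
  rw [Real.norm_eq_abs, abs_div, abs_of_pos (by positivity : (0:ℝ) < (r:ℝ)^j)]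
  calc |ψ ((r:ℝ)^j * x)| / (r:ℝ)^j ≤ C / (r:ℝ)^j := by gcongr; exact hC _
    _ = C * (1/(r:ℝ))^j := by rw [div_pow, one_pow]; ring

private lemma key_sum {r : ℕ} (hr : 2 ≤ r) {ψ : ℝ → ℝ} (hcont : Continuous ψ)
    (hper : ∀ x, ψ (x+1) = ψ x) (h0 : ψ 0 = 0)
    (hconc : ConcaveOn ℝ (Set.Icc (0:ℝ) 1) ψ)
    (hpos : ∀ x ∈ Set.Ioo (0:ℝ) 1, 0 < ψ x)
    {y : ℝ} (hy0 : 0 < y) (hy1 : y < 1) :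
    2*(r:ℝ)/((r:ℝ)-1) * ψ (1/2) * (y*(1-y)) ≤ ∑' m : ℕ, ψ ((r:ℝ)^m * y) / (r:ℝ)^m := by
  set ρ : ℝ := (r:ℝ) with hρdef
  have hρ : (2:ℝ) ≤ ρ := by rw [hρdef]; exact_mod_cast hr
  have hρ0 : (0:ℝ) < ρ := by linarith
  have hρ1 : (0:ℝ) < ρ - 1 := by linarith
  have h1 : ψ 1 = 0 := by have := hper 0; rw [zero_add] at this; rw [this, h0]
  have hψnn : ∀ t : ℝ, 0 ≤ t → t < 1 → 0 ≤ ψ t := by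
    intro t ht ht'
    rcases eq_or_lt_of_le ht with h|h
    · rw [← h, h0]
    · exact (hpos t ⟨h, ht'⟩).le
  have hhalf : 0 ≤ ψ (1/2) := (hpos _ ⟨by norm_num, by norm_num⟩).le
  set C : ℝ := 2*ρ/(ρ-1) * ψ (1/2) with hCdef
  have hC0 : 0 ≤ C := mul_nonneg (div_nonneg (by linarith) (by linarith)) hhalf
  set X : ℕ → ℝ := fun m => Int.fract (ρ^m * y) with hXdef
  have hX0 : ∀ m, 0 ≤ X m := fun m => Int.fract_nonneg _
  have hX1 : ∀ m, X m < 1 := fun m => Int.fract_lt_one _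
  have hXrec : ∀ m, X (m+1) = Int.fract (ρ * X m) := by
    intro m
    have e : ρ * X m = ρ^(m+1)*y + ((-((r:ℤ) * ⌊ρ^m*y⌋) : ℤ) : ℝ) := by
      simp only [hXdef, Int.fract]
      push_cast
      rw [← hρdef]
      ring
    simp only [hXdef]
    rw [e, Int.fract_add_intCast]
  have hfr : ∀ m, ψ (X m) = ψ (ρ^m*y) := fun m => psi_fract hper _
  have hterm : ∀ m : ℕ,
      C * (X m*(1-X m)/ρ^(2*m) - X (m+1)*(1-X (m+1))/ρ^(2*(m+1)))
        ≤ ψ (ρ^m*y)/ρ^m := by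
    intro m
    have hpt := pt_ineq r hr (hX0 m) (hX1 m)
    rw [← hρdef, ← hXrec m] at hpt
    have htent := tent hconc h0 h1 (hX0 m) (hX1 m).le
    have hcore : C * (X m*(1-X m) - X (m+1)*(1-X (m+1))/ρ^2) ≤ ψ (X m) := by
      calc C * (X m*(1-X m) - X (m+1)*(1-X (m+1))/ρ^2)
          = (2 * ψ (1/2)) * (ρ/(ρ-1) * (X m*(1-X m) - X (m+1)*(1-X (m+1))/ρ^2)) := by
            rw [hCdef]; ring
        _ ≤ (2 * ψ (1/2)) * min (X m) (1 - X m) :=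
            mul_le_mul_of_nonneg_left hpt (by linarith)
        _ ≤ ψ (X m) := htent
    have hdiv : C * (X m*(1-X m) - X (m+1)*(1-X (m+1))/ρ^2) / ρ^(2*m)
        ≤ ψ (X m) / ρ^(2*m) := by
      exact div_le_div_of_nonneg_right hcore (pow_pos hρ0 _).le
    have hdiv2 : ψ (X m) / ρ^(2*m) ≤ ψ (X m) / ρ^m := by
      have h1le : (1:ℝ) ≤ ρ := by linarith
      have hmle : m ≤ 2*m := by omega
      have hmm : ρ^m ≤ ρ^(2*m) := pow_le_pow_right₀ h1le hmle
      rw [div_le_div_iff₀ (pow_pos hρ0 _) (pow_pos hρ0 _)]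
      exact mul_le_mul_of_nonneg_left hmm (hψnn _ (hX0 m) (hX1 m))
    have hpow : ρ^(2*(m+1)) = ρ^(2*m)*ρ^2 := by rw [show 2*(m+1) = 2*m+2 by ring, pow_add]
    have heq : C * (X m*(1-X m)/ρ^(2*m) - X (m+1)*(1-X (m+1))/ρ^(2*(m+1)))
        = C * (X m*(1-X m) - X (m+1)*(1-X (m+1))/ρ^2) / ρ^(2*m) := by
      rw [hpow]; field_simp
    rw [heq, ← hfr m]
    exact le_trans hdiv hdiv2
  have hS : Summable (fun j : ℕ => ψ (ρ^j * y) / ρ^j) := usummable hcont hper hr y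
  have hpartial : ∀ M : ℕ,
      C * (X 0*(1-X 0)/ρ^(2*0) - X M*(1-X M)/ρ^(2*M)) ≤ ∑' m : ℕ, ψ (ρ^m*y)/ρ^m := by
    intro M
    have htel := Finset.sum_range_sub' (fun m => X m*(1-X m)/ρ^(2*m)) M
    calc C * (X 0*(1-X 0)/ρ^(2*0) - X M*(1-X M)/ρ^(2*M))
        = ∑ m ∈ Finset.range M,
            C * (X m*(1-X m)/ρ^(2*m) - X (m+1)*(1-X (m+1))/ρ^(2*(m+1))) := by
          rw [← Finset.mul_sum, htel]
      _ ≤ ∑ m ∈ Finset.range M, ψ (ρ^m*y)/ρ^m := Finset.sum_le_sum (fun m _ => hterm m)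
      _ ≤ ∑' m : ℕ, ψ (ρ^m*y)/ρ^m := by
          apply Summable.sum_le_tsum _ (fun i _ => ?_) hS
          rw [← hfr i]
          exact div_nonneg (hψnn _ (hX0 i) (hX1 i)) (pow_pos hρ0 _).le
  have htendA : Filter.Tendsto (fun M : ℕ => X M*(1-X M)/ρ^(2*M)) Filter.atTop (nhds 0) := by
    apply squeeze_zero (fun M => ?_) (fun M => ?_)
      (tendsto_pow_atTop_nhds_zero_of_lt_one (r := 1/ρ^2) (by positivity)
        (by rw [div_lt_one (by positivity)]; nlinarith))
    · apply div_nonneg (mul_nonneg (hX0 M) (by linarith [hX1 M])) (pow_pos hρ0 _).le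
    · show X M*(1-X M)/ρ^(2*M) ≤ (1/ρ^2)^M
      rw [div_pow, one_pow, ← pow_mul]
      gcongr
      nlinarith [hX0 M, hX1 M]
  have htend : Filter.Tendsto (fun M : ℕ => C * (X 0*(1-X 0)/ρ^(2*0) - X M*(1-X M)/ρ^(2*M)))
      Filter.atTop (nhds (C * (X 0*(1-X 0)/ρ^(2*0) - 0))) :=
    (Filter.Tendsto.const_mul C (tendsto_const_nhds.sub htendA))
  have hfin : C * (X 0*(1-X 0)/ρ^(2*0) - 0) ≤ ∑' m : ℕ, ψ (ρ^m*y)/ρ^m :=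
    le_of_tendsto htend (Filter.Eventually.of_forall hpartial)
  have hX0y : X 0 = y := by
    simp only [hXdef, pow_zero, one_mul]
    exact Int.fract_eq_self.2 ⟨hy0.le, hy1⟩
  rw [hX0y, pow_zero, div_one, sub_zero, hCdef] at hfin
  calc 2*ρ/(ρ-1) * ψ (1/2) * (y*(1-y)) = C * (y*(1-y)) := by rw [hCdef]
    _ ≤ ∑' m : ℕ, ψ (ρ^m*y)/ρ^m := hfin

set_option maxHeartbeats 1000000 in
theorem stmt14 (r : ℕ) (hr : 2 ≤ r) (ψ : ℝ → ℝ) (hψ : IsCp ψ)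
    (hconc : ConcaveOn ℝ (Set.Icc (0:ℝ) 1) ψ)
    (hpos : ∀ x ∈ Set.Ioo (0:ℝ) 1, 0 < ψ x) :
    memP r (2 * (r:ℝ) / ((r:ℝ) - 1) * ψ (1/2)) (Uop r ψ) := by
  obtain ⟨hcont, hper, h0⟩ := hψ
  intro n k hk0 hk1 y hy
  obtain ⟨hy0, hy1⟩ := hy
  have hρ : (2:ℝ) ≤ (r:ℝ) := by exact_mod_cast hr
  set ρ : ℝ := (r:ℝ) with hρdef
  have hρ0 : (0:ℝ) < ρ := by linarith
  have hρn : (0:ℝ) < ρ^n := pow_pos hρ0 n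
  have h1y : (0:ℝ) < 1 - y := by linarith
  have hS : ∀ x : ℝ, Summable (fun j : ℕ => ψ (ρ^j * x) / ρ^j) := usummable hcont hper hr
  set x0 : ℝ := ((k:ℝ))/ρ^n with hx0
  set xy : ℝ := ((k:ℝ)+y)/ρ^n with hxy
  set x1 : ℝ := ((k:ℝ)+1)/ρ^n with hx1
  set F : ℕ → ℝ := fun j => 2*ρ^n * ((ψ (ρ^j*x1)/ρ^j - ψ (ρ^j*xy)/ρ^j)/((1-y)/ρ^n)
      - (ψ (ρ^j*xy)/ρ^j - ψ (ρ^j*x0)/ρ^j)/(y/ρ^n)) with hF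
  have hsF : Summable F := by
    apply Summable.mul_left
    exact Summable.sub (((hS x1).sub (hS xy)).div_const _) (((hS xy).sub (hS x0)).div_const _)
  have hDel : Del r (Uop r ψ) n k y = ∑' j, F j := by
    unfold Del delP delM Uop
    rw [← hρdef, ← hx0, ← hxy, ← hx1,
      ← Summable.tsum_sub (hS x1) (hS xy), ← Summable.tsum_sub (hS xy) (hS x0),
      ← tsum_div_const, ← tsum_div_const,
      ← Summable.tsum_sub (((hS x1).sub (hS xy)).div_const _) (((hS xy).sub (hS x0)).div_const _),
      ← tsum_mul_left]
  -- the terms j < n are ≤ 0 by concavity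
  have hokd : ∀ j, j < n → F j ≤ 0 := by
    intro j hj
    set d : ℕ := n - j with hd
    have hnd : n = j + d := by omega
    have hρd : (0:ℝ) < ρ^d := pow_pos hρ0 d
    have hρj : (0:ℝ) < ρ^j := pow_pos hρ0 j
    set m : ℤ := k / (r:ℤ)^d with hm
    have hrd0 : (0:ℤ) < (r:ℤ)^d := by positivity
    have hm1 : m * (r:ℤ)^d ≤ k := Int.ediv_mul_le k hrd0.ne'
    have hm2 : k + 1 ≤ (m + 1) * (r:ℤ)^d := Int.add_one_le_iff.2 (Int.lt_ediv_add_one_mul_self k hrd0)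
    have hm1R : (m:ℝ) * ρ^d ≤ (k:ℝ) := by rw [hρdef]; exact_mod_cast hm1
    have hm2R : (k:ℝ) + 1 ≤ ((m:ℝ)+1) * ρ^d := by rw [hρdef]; exact_mod_cast hm2
    have hA0 : (0:ℝ) ≤ (k:ℝ)/ρ^d - (m:ℝ) := by
      rw [sub_nonneg, le_div_iff₀ hρd]; linarith
    have hC1 : ((k:ℝ)+1)/ρ^d - (m:ℝ) ≤ 1 := by
      rw [sub_le_iff_le_add, div_le_iff₀ hρd]; linarith
    have hAC : (k:ℝ)/ρ^d - (m:ℝ) ≤ ((k:ℝ)+1)/ρ^d - (m:ℝ) := by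
      have : (k:ℝ)/ρ^d ≤ ((k:ℝ)+1)/ρ^d := by apply div_le_div_of_nonneg_right (by linarith) hρd.le
      linarith
    have hcc := hconc.2 (x := (k:ℝ)/ρ^d - (m:ℝ)) ⟨hA0, le_trans hAC hC1⟩
      (y := ((k:ℝ)+1)/ρ^d - (m:ℝ)) ⟨le_trans hA0 hAC, hC1⟩
      (show (0:ℝ) ≤ 1 - y by linarith) (show (0:ℝ) ≤ y by linarith)
      (show (1-y) + y = 1 by ring)
    simp only [smul_eq_mul] at hcc
    have harg : (1-y)*((k:ℝ)/ρ^d - (m:ℝ)) + y*(((k:ℝ)+1)/ρ^d - (m:ℝ))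
        = ((k:ℝ)+y)/ρ^d - (m:ℝ) := by field_simp; ring
    rw [harg] at hcc
    have hsh : ∀ t : ℝ, ψ (t - (m:ℝ)) = ψ t := by
      intro t
      have h := per_int hper t (-m)
      push_cast at h
      rw [← sub_eq_add_neg] at h
      exact h
    rw [hsh, hsh, hsh] at hcc
    -- hcc : (1-y) * ψ (k/ρ^d) + y * ψ ((k+1)/ρ^d) ≤ ψ ((k+y)/ρ^d)
    have e0 : ρ^j * x0 = (k:ℝ)/ρ^d := by rw [hx0, hnd, pow_add]; field_simp
    have ey : ρ^j * xy = ((k:ℝ)+y)/ρ^d := by rw [hxy, hnd, pow_add]; field_simp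
    have e1 : ρ^j * x1 = ((k:ℝ)+1)/ρ^d := by rw [hx1, hnd, pow_add]; field_simp
    simp only [hF]
    rw [e0, ey, e1]
    have lhs_eq : (ψ (((k:ℝ)+1)/ρ^d)/ρ^j - ψ (((k:ℝ)+y)/ρ^d)/ρ^j)/((1-y)/ρ^n)
        = ρ^d*(ψ (((k:ℝ)+1)/ρ^d) - ψ (((k:ℝ)+y)/ρ^d))/(1-y) := by
      rw [hnd, pow_add]; field_simp
    have rhs_eq : (ψ (((k:ℝ)+y)/ρ^d)/ρ^j - ψ ((k:ℝ)/ρ^d)/ρ^j)/(y/ρ^n)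
        = ρ^d*(ψ (((k:ℝ)+y)/ρ^d) - ψ ((k:ℝ)/ρ^d))/y := by
      rw [hnd, pow_add]; field_simp
    rw [lhs_eq, rhs_eq]
    apply mul_nonpos_of_nonneg_of_nonpos (by positivity)
    rw [sub_nonpos, div_le_div_iff₀ h1y hy0]
    nlinarith [mul_le_mul_of_nonneg_left hcc hρd.le]
  -- tail terms
  have htail : ∀ m : ℕ, F (m+n) = (-(2*ρ^n/(y*(1-y)))) * (ψ (ρ^m*y)/ρ^m) := by
    intro m
    have e1 : ρ^(m+n) * x1 = (((r:ℤ)^m*(k+1) : ℤ) : ℝ) := by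
      rw [hx1, pow_add, hρdef]; push_cast; field_simp
    have e0 : ρ^(m+n) * x0 = (((r:ℤ)^m*k : ℤ) : ℝ) := by
      rw [hx0, pow_add, hρdef]; push_cast; field_simp
    have ey : ρ^(m+n) * xy = ρ^m*y + (((r:ℤ)^m*k : ℤ) : ℝ) := by
      rw [hxy, pow_add, hρdef]; push_cast; field_simp; ring
    have hv1 : ψ (ρ^(m+n) * x1) = 0 := by rw [e1]; exact psi_int hper h0 _
    have hv0 : ψ (ρ^(m+n) * x0) = 0 := by rw [e0]; exact psi_int hper h0 _
    have hvy : ψ (ρ^(m+n) * xy) = ψ (ρ^m*y) := by rw [ey]; exact per_int hper _ _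
    simp only [hF]
    rw [hv1, hv0, hvy, pow_add]
    field_simp
    ring
  rw [hDel, ← Summable.sum_add_tsum_nat_add n hsF]
  have hsum1 : ∑ j ∈ Finset.range n, F j ≤ 0 :=
    Finset.sum_nonpos (fun j hj => hokd j (Finset.mem_range.1 hj))
  have htt : ∑' m : ℕ, F (m+n) = (-(2*ρ^n/(y*(1-y)))) * ∑' m : ℕ, ψ (ρ^m*y)/ρ^m := by
    rw [tsum_congr htail, tsum_mul_left]
  have hkey := key_sum hr hcont hper h0 hconc hpos hy0 hy1
  rw [← hρdef] at hkey
  have hK0 : (-(2*ρ^n/(y*(1-y)))) ≤ 0 := by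
    apply neg_nonpos_of_nonneg
    positivity
  have hmul : (-(2*ρ^n/(y*(1-y)))) * ∑' m : ℕ, ψ (ρ^m*y)/ρ^m
      ≤ (-(2*ρ^n/(y*(1-y)))) * (2*ρ/(ρ-1) * ψ (1/2) * (y*(1-y))) :=
    mul_le_mul_of_nonpos_left hkey hK0
  have hfin : (-(2*ρ^n/(y*(1-y)))) * (2*ρ/(ρ-1) * ψ (1/2) * (y*(1-y)))
      = -2 * (2*ρ/(ρ-1) * ψ (1/2)) * ρ^n := by
    have hy' : y ≠ 0 := ne_of_gt hy0
    have h1y' : (1:ℝ)-y ≠ 0 := ne_of_gt h1y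
    have hρ1' : ρ - 1 ≠ 0 := ne_of_gt (by linarith)
    field_simp
  calc ∑ j ∈ Finset.range n, F j + ∑' m : ℕ, F (m+n)
      ≤ 0 + (-(2*ρ^n/(y*(1-y)))) * (2*ρ/(ρ-1) * ψ (1/2) * (y*(1-y))) := by
        rw [htt]; exact add_le_add hsum1 hmul
    _ = -2 * (2*ρ/(ρ-1) * ψ (1/2)) * ρ^n := by rw [zero_add, hfin]
end

section
/- Let r≥2 be an integer and θ∈C_p(ℝ) with θ(x)=x² on [0,1/r]. Let U_θ(x)=Σ_{j≥0} r^{-j}θ(r^j x). Then for every n∈ℕ₀, Δ_{n,0}(1/r;U_θ) = -2/(r-1). In particular, U_θ does not belong to P=∪_{c>0}P_c. -/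
/-!
At `x = r⁻ᵐ` the series for `U_θ` is a finite geometric sum: for `j < m` the point `rʲx` lies in
`[0, 1/r]`, where `θ` is the square, and for `j ≥ m` it is an integer, where `θ` vanishes. Hence
`U_θ(r⁻ᵐ) = (rᵐ - 1) / ((r - 1) r²ᵐ)`, and substituting `m = n, n + 1` into `Δ_{n,0}(1/r)` gives the
constant `-2/(r-1)`. A second difference that stays bounded while `-2crⁿ → -∞` rules out every `P_c`.
-/

section

variable {r : ℕ} {θ : ℝ → ℝ}

lemma Uop_zero (hθ0 : θ 0 = 0) : Uop r θ 0 = 0 := by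
  simp [Uop, hθ0]

lemma Uop_inv_pow (hr : 1 < r) (hθp : Function.Periodic θ 1) (hθ0 : θ 0 = 0)
    (hθsq : ∀ x ∈ Set.Icc (0:ℝ) (1 / (r:ℝ)), θ x = x ^ 2) (m : ℕ) :
    Uop r θ ((r:ℝ) ^ m)⁻¹ = ((r:ℝ) ^ m - 1) / (((r:ℝ) - 1) * (r:ℝ) ^ (2 * m)) := by
  have hr1 : (1:ℝ) < r := by exact_mod_cast hr
  have hr0 : (0:ℝ) < r := one_pos.trans hr1
  have hvanish : ∀ j ∉ Finset.range m, θ ((r:ℝ) ^ j * ((r:ℝ) ^ m)⁻¹) / (r:ℝ) ^ j = 0 := by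
    intro j hj
    have hmj : m ≤ j := not_lt.mp (Finset.mem_range.not.mp hj)
    have hθint : θ ((r ^ (j - m) : ℕ) * 1) = θ 0 := hθp.nat_mul_eq _
    rw [← pow_sub₀ _ hr0.ne' hmj]
    push_cast [mul_one] at hθint
    rw [hθint, hθ0, zero_div]
  have hsquare : ∀ j ∈ Finset.range m, θ ((r:ℝ) ^ j * ((r:ℝ) ^ m)⁻¹) / (r:ℝ) ^ j
      = (r:ℝ) ^ j / (r:ℝ) ^ (2 * m) := by
    intro j hj
    have hx1 : (r:ℝ) ^ j * ((r:ℝ) ^ m)⁻¹ ≤ 1 / r := by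
      rw [← div_eq_mul_inv, div_le_div_iff₀ (by positivity) hr0, one_mul, ← pow_succ]
      exact pow_le_pow_right₀ hr1.le (Finset.mem_range.mp hj)
    rw [hθsq _ ⟨by positivity, hx1⟩]
    field_simp
    ring
  rw [Uop, tsum_eq_sum hvanish, Finset.sum_congr rfl hsquare, ← Finset.sum_div,
    geom_sum_eq hr1.ne']
  field_simp

lemma Del_Uop_zero_inv (hr : 1 < r) (hθp : Function.Periodic θ 1) (hθ0 : θ 0 = 0)
    (hθsq : ∀ x ∈ Set.Icc (0:ℝ) (1 / (r:ℝ)), θ x = x ^ 2) (n : ℕ) :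
    Del r (Uop r θ) n 0 (1 / (r:ℝ)) = -2 / ((r:ℝ) - 1) := by
  have hr1 : (1:ℝ) < r := by exact_mod_cast hr
  have hr0 : (r:ℝ) ≠ 0 := (one_pos.trans hr1).ne'
  have hright : ((0:ℝ) + 1) / (r:ℝ) ^ n = ((r:ℝ) ^ n)⁻¹ := by rw [zero_add, one_div]
  have hmid : ((0:ℝ) + 1 / r) / (r:ℝ) ^ n = ((r:ℝ) ^ (n + 1))⁻¹ := by
    rw [zero_add, pow_succ, mul_inv, one_div, div_eq_mul_inv, mul_comm]
  rw [Del, delP, delM, Int.cast_zero, hright, hmid, zero_div, Uop_zero hθ0,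
    Uop_inv_pow hr hθp hθ0 hθsq n, Uop_inv_pow hr hθp hθ0 hθsq (n + 1)]
  have hr1' : (r:ℝ) - 1 ≠ 0 := sub_ne_zero.mpr hr1.ne'
  field_simp
  ring

end

lemma not_memP_of_le_Del {r : ℕ} (hr : 1 < r) {f : ℝ → ℝ} {K : ℝ}
    (hK : ∀ n : ℕ, K ≤ Del r f n 0 (1 / (r:ℝ))) : ¬ ∃ c : ℝ, 0 < c ∧ memP r c f := by
  rintro ⟨c, hc, hmem⟩
  have hr1 : (1:ℝ) < r := by exact_mod_cast hr
  obtain ⟨n, hn⟩ := pow_unbounded_of_one_lt (-K / (2 * c)) hr1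
  have hk : (0:ℤ) ≤ (r:ℤ) ^ n - 1 := sub_nonneg.mpr (one_le_pow₀ (by exact_mod_cast hr.le))
  have hy : 1 / (r:ℝ) ∈ Set.Ioo (0:ℝ) 1 := ⟨by positivity, (div_lt_one (by positivity)).mpr hr1⟩
  have hle := (hK n).trans (hmem n 0 le_rfl hk _ hy)
  rw [div_lt_iff₀ (by positivity)] at hn
  linarith

theorem stmt18 (r : ℕ) (hr : 2 ≤ r) (θ : ℝ → ℝ) (hθ : IsCp θ)
    (hθsq : ∀ x ∈ Set.Icc (0:ℝ) (1 / (r:ℝ)), θ x = x ^ 2) :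
    (∀ n : ℕ, Del r (Uop r θ) n 0 (1 / (r:ℝ)) = -2 / ((r:ℝ) - 1)) ∧
      ¬ ∃ c : ℝ, 0 < c ∧ memP r c (Uop r θ) := by
  obtain ⟨-, hθp, hθ0⟩ := hθ
  have hDel := Del_Uop_zero_inv hr hθp hθ0 hθsq
  exact ⟨hDel, not_memP_of_le_Del hr fun n => (hDel n).ge⟩
end
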